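/- arXiv:2103.01574 — 6 statements merged into one kernel-verified Lean document; each statement's English description precedes it below -/
import Mathlib

section
/- (Motzkin–Straus, easy direction plus optimality) For any finite simple graph G on n vertices (n ≥ 1), min{x^T(I + A_G)x : x ∈ Δ_n} = 1/α(G). -/
/-!
The value `1 / α` is attained at the uniform distribution on a maximum stable set `S`: the
support is stable, so the form reduces to `∑ xᵢ² = 1 / |S|`.

For the lower bound, note that along `e_j - e_i` for an edge `ij` the form `x ↦ xᵀ(I + A)x` is
affine, its quadratic coefficient being `1 + 1 - 2 = 0`. Hence moving all the mass of one endpoint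
of an edge inside the support onto the other one, in the direction in which the form does not
increase, shrinks the support. Iterating ends at a point `y` with stable support `S`, where the
form equals `∑ yᵢ² ≥ 1 / |S| ≥ 1 / α` by Cauchy–Schwarz.
-/

open Matrix Finset
open scoped Classical

def IsStable {n : ℕ} (G : SimpleGraph (Fin n)) (S : Finset (Fin n)) : Prop :=
  ∀ i ∈ S, ∀ j ∈ S, ¬ G.Adj i j

noncomputable def alpha {n : ℕ} (G : SimpleGraph (Fin n)) : ℕ :=
  sSup {k | ∃ S : Finset (Fin n), IsStable G S ∧ S.card = k}

noncomputable def indic {n : ℕ} (S : Finset (Fin n)) : Fin n → ℝ :=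
  fun i => if i ∈ S then 1 else 0

noncomputable def qform {n : ℕ} (M : Matrix (Fin n) (Fin n) ℝ) (x : Fin n → ℝ) : ℝ :=
  x ⬝ᵥ M.mulVec x

noncomputable def fG {n : ℕ} (G : SimpleGraph (Fin n)) (x : Fin n → ℝ) : ℝ :=
  qform (1 + G.adjMatrix ℝ) x

noncomputable def globMin {n : ℕ} (f : (Fin n → ℝ) → ℝ) : Set (Fin n → ℝ) :=
  {x | x ∈ stdSimplex ℝ (Fin n) ∧ ∀ y ∈ stdSimplex ℝ (Fin n), f x ≤ f y}

section

variable {n : ℕ}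

lemma bddAbove_stable_card (G : SimpleGraph (Fin n)) :
    BddAbove {k | ∃ S : Finset (Fin n), IsStable G S ∧ S.card = k} := by
  refine ⟨n, ?_⟩
  rintro k ⟨S, -, rfl⟩
  simpa using S.card_le_univ

lemma IsStable.card_le_alpha {G : SimpleGraph (Fin n)} {S : Finset (Fin n)}
    (h : IsStable G S) : S.card ≤ alpha G :=
  le_csSup (bddAbove_stable_card G) ⟨S, h, rfl⟩

lemma exists_isStable_card_eq_alpha (G : SimpleGraph (Fin n)) :
    ∃ S : Finset (Fin n), IsStable G S ∧ S.card = alpha G :=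
  Nat.sSup_mem (s := {k | ∃ S : Finset (Fin n), IsStable G S ∧ S.card = k})
    ⟨0, ∅, by simp [IsStable], rfl⟩ (bddAbove_stable_card G)

lemma alpha_pos (hn : 0 < n) (G : SimpleGraph (Fin n)) : 0 < alpha G := by
  simpa [Nat.one_le_iff_ne_zero, Nat.pos_iff_ne_zero] using
    (show IsStable G {⟨0, hn⟩} by simp [IsStable]).card_le_alpha

lemma qform_add_smul {M : Matrix (Fin n) (Fin n) ℝ} (hM : M.IsSymm)
    (x w : Fin n → ℝ) (c : ℝ) :
    qform M (x + c • w) = qform M x + 2 * c * (w ⬝ᵥ M *ᵥ x) + c ^ 2 * qform M w := by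
  have hsymm : x ⬝ᵥ M *ᵥ w = w ⬝ᵥ M *ᵥ x := by
    rw [dotProduct_mulVec, ← mulVec_transpose, hM.eq, dotProduct_comm]
  simp only [qform, mulVec_add, mulVec_smul, dotProduct_add, add_dotProduct, dotProduct_smul,
    smul_dotProduct, hsymm, smul_eq_mul]
  ring

lemma isSymm_one_add_adjMatrix (G : SimpleGraph (Fin n)) :
    (1 + G.adjMatrix ℝ).IsSymm := by
  rw [IsSymm, transpose_add, transpose_one, SimpleGraph.transpose_adjMatrix]

lemma fG_eq_sum_sq_of_isStable {G : SimpleGraph (Fin n)} {S : Finset (Fin n)}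
    (hS : IsStable G S) {x : Fin n → ℝ} (hx : ∀ i ∉ S, x i = 0) :
    fG G x = ∑ i, x i ^ 2 := by
  simp only [fG, qform, dotProduct, mulVec, Finset.mul_sum]
  refine Finset.sum_congr rfl fun i _ => ?_
  rw [Finset.sum_eq_single i]
  · simp [sq]
  · intro j _ hji
    by_cases hi : i ∈ S
    · by_cases hj : j ∈ S
      · simp [Ne.symm hji, hS i hi j hj]
      · simp [hx j hj]
    · simp [hx i hi]
  · simp

lemma one_le_card_mul_sum_sq {S : Finset (Fin n)} {x : Fin n → ℝ}
    (hx : x ∈ stdSimplex ℝ (Fin n)) (hS : ∀ i ∉ S, x i = 0) :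
    1 ≤ S.card * ∑ i, x i ^ 2 := by
  have hsum : ∑ i ∈ S, x i = 1 := by
    rw [← hx.2]
    exact Finset.sum_subset (Finset.subset_univ S) fun i _ hi => hS i hi
  calc (1 : ℝ) = (∑ i ∈ S, x i) ^ 2 := by rw [hsum, one_pow]
    _ ≤ S.card * ∑ i ∈ S, x i ^ 2 := sq_sum_le_card_mul_sum_sq
    _ ≤ S.card * ∑ i, x i ^ 2 := by
      gcongr
      exact Finset.subset_univ S

lemma qform_single_sub_single (M : Matrix (Fin n) (Fin n) ℝ) (i j : Fin n) :
    qform M (Pi.single j 1 - Pi.single i 1) = M j j - M j i - M i j + M i i := by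
  simp only [qform, mulVec_sub, mulVec_single_one, sub_dotProduct, dotProduct_sub,
    single_dotProduct, one_mul, col_apply]
  ring

noncomputable def supportFinset (x : Fin n → ℝ) : Finset (Fin n) := univ.filter (x · ≠ 0)

lemma mem_supportFinset {x : Fin n → ℝ} {i : Fin n} : i ∈ supportFinset x ↔ x i ≠ 0 := by
  simp [supportFinset]

noncomputable def shiftMass (x : Fin n → ℝ) (i j : Fin n) : Fin n → ℝ :=
  x + x i • (Pi.single j 1 - Pi.single i 1)

lemma shiftMass_apply (x : Fin n → ℝ) {i j : Fin n} (hij : i ≠ j) (k : Fin n) :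
    shiftMass x i j k = if k = i then 0 else if k = j then x j + x i else x k := by
  by_cases hki : k = i
  · subst hki; simp [shiftMass, hij]
  · by_cases hkj : k = j
    · subst hkj; simp [shiftMass, hki]
    · simp [shiftMass, hki, hkj]

lemma shiftMass_mem_stdSimplex {x : Fin n → ℝ} (hx : x ∈ stdSimplex ℝ (Fin n))
    {i j : Fin n} (hij : i ≠ j) : shiftMass x i j ∈ stdSimplex ℝ (Fin n) := by
  refine ⟨fun k => ?_, ?_⟩
  · rw [shiftMass_apply x hij]
    split_ifs
    exacts [le_rfl, add_nonneg (hx.1 j) (hx.1 i), hx.1 k]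
  · simp [shiftMass, Finset.sum_add_distrib, ← Finset.mul_sum, Finset.sum_sub_distrib, hx.2]

lemma card_supportFinset_shiftMass_lt {x : Fin n → ℝ} {i j : Fin n} (hij : i ≠ j)
    (hi : x i ≠ 0) (hj : x j ≠ 0) :
    (supportFinset (shiftMass x i j)).card < (supportFinset x).card := by
  refine Finset.card_lt_card ⟨fun k hk => ?_, fun h => ?_⟩
  · rw [mem_supportFinset, shiftMass_apply x hij] at hk
    rw [mem_supportFinset]
    split_ifs at hk with hki hkj
    exacts [absurd rfl hk, hkj ▸ hj, hk]
  · have := h (mem_supportFinset.2 hi)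
    simp [mem_supportFinset, shiftMass_apply x hij] at this

lemma fG_shiftMass {G : SimpleGraph (Fin n)} {i j : Fin n} (h : G.Adj i j)
    (x : Fin n → ℝ) :
    fG G (shiftMass x i j) =
      fG G x + 2 * x i * (((1 + G.adjMatrix ℝ) *ᵥ x) j - ((1 + G.adjMatrix ℝ) *ᵥ x) i) := by
  rw [fG, shiftMass, qform_add_smul (isSymm_one_add_adjMatrix G), qform_single_sub_single]
  simp [h, h.symm, h.ne, h.ne.symm, sub_dotProduct, single_dotProduct, fG]

lemma exists_fG_le_of_not_isStable {G : SimpleGraph (Fin n)} {x : Fin n → ℝ}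
    (hx : x ∈ stdSimplex ℝ (Fin n)) (hS : ¬ IsStable G (supportFinset x)) :
    ∃ y ∈ stdSimplex ℝ (Fin n),
      (supportFinset y).card < (supportFinset x).card ∧ fG G y ≤ fG G x := by
  set u := (1 + G.adjMatrix ℝ) *ᵥ x
  obtain ⟨i, j, hi, hj, hadj, hu⟩ : ∃ i j, x i ≠ 0 ∧ x j ≠ 0 ∧ G.Adj i j ∧ u j ≤ u i := by
    simp only [IsStable, mem_supportFinset, not_forall, not_not] at hS
    obtain ⟨a, ha, b, hb, hab⟩ := hS
    rcases le_total (u b) (u a) with h | h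
    exacts [⟨a, b, ha, hb, hab, h⟩, ⟨b, a, hb, ha, hab.symm, h⟩]
  refine ⟨shiftMass x i j, shiftMass_mem_stdSimplex hx hadj.ne,
    card_supportFinset_shiftMass_lt hadj.ne hi hj, ?_⟩
  rw [fG_shiftMass hadj]
  linarith [mul_le_mul_of_nonneg_left hu (hx.1 i)]

lemma exists_isStable_supportFinset_fG_le (G : SimpleGraph (Fin n)) {x : Fin n → ℝ}
    (hx : x ∈ stdSimplex ℝ (Fin n)) :
    ∃ y ∈ stdSimplex ℝ (Fin n), IsStable G (supportFinset y) ∧ fG G y ≤ fG G x := by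
  by_cases hS : IsStable G (supportFinset x)
  · exact ⟨x, hx, hS, le_rfl⟩
  obtain ⟨y, hy, hcard, hle⟩ := exists_fG_le_of_not_isStable hx hS
  obtain ⟨z, hz, hzS, hzy⟩ := exists_isStable_supportFinset_fG_le G hy
  exact ⟨z, hz, hzS, hzy.trans hle⟩
termination_by (supportFinset x).card

lemma inv_alpha_le_fG (G : SimpleGraph (Fin n)) {x : Fin n → ℝ}
    (hx : x ∈ stdSimplex ℝ (Fin n)) : 1 / (alpha G : ℝ) ≤ fG G x := by
  obtain ⟨y, hy, hyS, hyx⟩ := exists_isStable_supportFinset_fG_le G hx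
  have hzero : ∀ i ∉ supportFinset y, y i = 0 := fun i hi => by
    simpa [mem_supportFinset] using hi
  have hcard : ((supportFinset y).card : ℝ) ≤ alpha G := by exact_mod_cast hyS.card_le_alpha
  have hone := one_le_card_mul_sum_sq hy hzero
  have hα : (0 : ℝ) < alpha G := by
    nlinarith [Finset.sum_nonneg fun i (_ : i ∈ univ) => sq_nonneg (y i)]
  rw [div_le_iff₀ hα]
  calc 1 ≤ _ := hone
    _ ≤ (alpha G : ℝ) * ∑ i, y i ^ 2 := by gcongr
    _ = fG G y * alpha G := by rw [fG_eq_sum_sq_of_isStable hyS hzero, mul_comm]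
    _ ≤ fG G x * alpha G := by gcongr

lemma fG_smul_indic {G : SimpleGraph (Fin n)} {S : Finset (Fin n)} (hS : IsStable G S) :
    fG G ((S.card : ℝ)⁻¹ • indic S) = 1 / S.card := by
  rw [fG_eq_sum_sq_of_isStable hS fun i hi => by simp [indic, hi]]
  simp [indic, Finset.sum_ite_mem]
  rcases eq_or_ne (S.card : ℝ) 0 with h | h
  · simp [h]
  · field_simp

lemma smul_indic_mem_stdSimplex {S : Finset (Fin n)} (hS : S.Nonempty) :
    (S.card : ℝ)⁻¹ • indic S ∈ stdSimplex ℝ (Fin n) := by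
  refine ⟨fun i => ?_, ?_⟩
  · simp only [indic, Pi.smul_apply, smul_eq_mul]
    split_ifs <;> positivity
  · simp [indic, Finset.sum_ite_mem]
    exact mul_inv_cancel₀ (Nat.cast_ne_zero.2 hS.card_pos.ne')

end

theorem stmt_1 (n : ℕ) (hn : 0 < n) (G : SimpleGraph (Fin n)) :
    IsLeast (fG G '' stdSimplex ℝ (Fin n)) (1 / (alpha G : ℝ)) := by
  refine ⟨?_, ?_⟩
  · obtain ⟨S, hS, hcard⟩ := exists_isStable_card_eq_alpha G
    have hne : S.Nonempty := Finset.card_pos.1 (hcard ▸ alpha_pos hn G)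
    exact ⟨_, smul_indic_mem_stdSimplex hne, by rw [fG_smul_indic hS, hcard]⟩
  · rintro _ ⟨x, hx, rfl⟩
    exact inv_alpha_le_fG G hx
end

section
/- Let M ∈ 𝒮^n be symmetric with M_{11} = M_{12} = M_{22} = 1. If x is a local minimizer of min{y^T M y : y ∈ Δ_n} with x_1 > 0 and x_2 > 0, then defining x̃ = x + x_2 e_1 − x_2 e_2 and x̄ = x − x_1 e_1 + x_1 e_2, for every t ∈ [0,1] one has p_M(t x̃ + (1−t) x̄) = p_M(x), where p_M(y) = y^T M y. -/
open Matrix Finset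
open scoped Classical

theorem stmt_2 (n : ℕ) (M : Matrix (Fin (n+2)) (Fin (n+2)) ℝ) (hM : M.IsSymm)
    (h11 : M 0 0 = 1) (h12 : M 0 1 = 1) (h22 : M 1 1 = 1)
    (x : Fin (n+2) → ℝ) (hx : x ∈ stdSimplex ℝ (Fin (n+2)))
    (hloc : IsLocalMinOn (qform M) (stdSimplex ℝ (Fin (n+2))) x)
    (h1 : 0 < x 0) (h2 : 0 < x 1) :
    ∀ t ∈ Set.Icc (0:ℝ) 1,
      qform M (fun i =>
        t * (x i + x 1 * (if i = 0 then (1:ℝ) else 0) - x 1 * (if i = 1 then (1:ℝ) else 0))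
        + (1 - t) * (x i - x 0 * (if i = 0 then (1:ℝ) else 0) + x 0 * (if i = 1 then (1:ℝ) else 0)))
      = qform M x := by
  have h01 : (0 : Fin (n+2)) ≠ 1 := Fin.ne_of_val_ne (by simp)
  set d : Fin (n+2) → ℝ := Pi.single 0 1 - Pi.single 1 1 with hd_def
  have hdi : ∀ i, d i = (if i = 0 then (1:ℝ) else 0) - (if i = 1 then (1:ℝ) else 0) := by
    intro i; simp [hd_def, Pi.single_apply, eq_comm]
  -- M 1 0 = 1
  have hM10 : M 1 0 = 1 := by
    have := congrFun (congrFun hM.eq 1) 0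
    simp only [Matrix.transpose_apply] at this
    rw [this] at h12; exact h12
  have hMd : M.mulVec d = fun i => M i 0 - M i 1 := by
    ext i
    simp [hd_def, Matrix.mulVec_sub, Matrix.mulVec_single]
  have hdv : ∀ v : Fin (n+2) → ℝ, d ⬝ᵥ v = v 0 - v 1 := by
    intro v
    simp [hd_def, sub_dotProduct, single_dotProduct]
  have hcd : d ⬝ᵥ M.mulVec d = 0 := by
    rw [hdv, hMd]
    simp only [h11, h12, h22, hM10]; ring
  have hsym : x ⬝ᵥ M.mulVec d = d ⬝ᵥ M.mulVec x := by
    rw [Matrix.dotProduct_mulVec]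
    have : M.vecMul x = M.mulVec x := by
      conv_lhs => rw [← hM.eq]
      rw [Matrix.vecMul_transpose]
    rw [this, dotProduct_comm]
  have hq : ∀ s : ℝ, qform M (x + s • d) = qform M x + 2 * s * (d ⬝ᵥ M.mulVec x) := by
    intro s
    have hexp : qform M (x + s • d)
        = qform M x + s * (d ⬝ᵥ M.mulVec x + x ⬝ᵥ M.mulVec d) + s^2 * (d ⬝ᵥ M.mulVec d) := by
      simp [qform, Matrix.mulVec_add, Matrix.mulVec_smul, dotProduct_add,
        add_dotProduct, smul_dotProduct, dotProduct_smul]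
      ring
    rw [hexp, hsym, hcd]; ring
  obtain ⟨hx0, hx1⟩ := hx
  have hmem : ∀ s : ℝ, -x 0 ≤ s → s ≤ x 1 → x + s • d ∈ stdSimplex ℝ (Fin (n+2)) := by
    intro s hs1 hs2
    constructor
    · intro i
      have hval : (x + s • d) i = x i + s * d i := rfl
      rw [hval, hdi i]
      by_cases hi0 : i = 0
      · subst hi0; simp only [if_pos rfl, if_neg h01, if_true]; norm_num; linarith
      by_cases hi1 : i = 1
      · subst hi1; simp only [if_neg (Ne.symm h01), if_pos rfl, if_true]; norm_num; linarith
      · simp only [if_neg hi0, if_neg hi1]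
        have := hx0 i; linarith
    · have hsum : ∑ i, (x + s • d) i = (∑ i, x i) + s * ∑ i, d i := by
        simp [Finset.sum_add_distrib, Finset.mul_sum]
      have hsd : ∑ i, d i = 0 := by
        simp [hd_def, Finset.sum_sub_distrib, Finset.sum_pi_single]
      rw [hsum, hx1, hsd]; ring
  have hd1 : ‖d‖ ≤ 1 := by
    rw [pi_norm_le_iff_of_nonneg zero_le_one]
    intro i
    rw [Real.norm_eq_abs, hdi i]
    by_cases hi0 : i = 0
    · subst hi0; simp [h01]
    by_cases hi1 : i = 1
    · subst hi1; simp [Ne.symm h01]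
    · simp [hi0, hi1]
  have hc : d ⬝ᵥ M.mulVec x = 0 := by
    obtain ⟨ε, hε, hball⟩ := Metric.mem_nhdsWithin_iff.mp hloc
    set s0 : ℝ := min (ε/2) (min (x 0) (x 1)) with hs0_def
    have hs0 : 0 < s0 := lt_min (by linarith) (lt_min h1 h2)
    have hs0x0 : s0 ≤ x 0 := le_trans (min_le_right _ _) (min_le_left _ _)
    have hs0x1 : s0 ≤ x 1 := le_trans (min_le_right _ _) (min_le_right _ _)
    have hs0ε : s0 < ε := lt_of_le_of_lt (min_le_left _ _) (by linarith)
    have hdist : ∀ σ : ℝ, |σ| ≤ s0 → x + σ • d ∈ Metric.ball x ε := by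
      intro σ hσ
      rw [Metric.mem_ball, dist_eq_norm, add_sub_cancel_left, norm_smul, Real.norm_eq_abs]
      calc |σ| * ‖d‖ ≤ |σ| * 1 := by
            exact mul_le_mul_of_nonneg_left hd1 (abs_nonneg σ)
        _ = |σ| := mul_one _
        _ ≤ s0 := hσ
        _ < ε := hs0ε
    have hA : qform M x ≤ qform M (x + s0 • d) := by
      exact hball ⟨hdist s0 (by rw [abs_of_pos hs0]), hmem s0 (by linarith) hs0x1⟩
    have hB : qform M x ≤ qform M (x + (-s0) • d) := by
      exact hball ⟨hdist (-s0) (by rw [abs_neg, abs_of_pos hs0]),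
        hmem (-s0) (by linarith) (by linarith)⟩
    rw [hq s0] at hA
    rw [hq (-s0)] at hB
    nlinarith
  intro t ht
  have hpt : (fun i =>
        t * (x i + x 1 * (if i = 0 then (1:ℝ) else 0) - x 1 * (if i = 1 then (1:ℝ) else 0))
        + (1 - t) * (x i - x 0 * (if i = 0 then (1:ℝ) else 0) + x 0 * (if i = 1 then (1:ℝ) else 0)))
      = x + (t * x 1 - (1 - t) * x 0) • d := by
    funext i
    have hval : (x + (t * x 1 - (1 - t) * x 0) • d) i = x i + (t * x 1 - (1 - t) * x 0) * d i := rfl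
    rw [hval, hdi i]
    by_cases hi0 : i = 0
    · subst hi0; simp only [if_pos rfl, if_neg h01]; ring
    by_cases hi1 : i = 1
    · subst hi1; simp only [if_neg (Ne.symm h01), if_pos rfl]; ring
    · simp only [if_neg hi0, if_neg hi1]; ring
  rw [hpt, hq, hc]; ring
end

section
/- Let G be a graph, x ∈ Δ_n with support S = Supp(x), and suppose S is a stable set of G. If x is a local minimizer of f_G(y) = y^T(I + A_G)y over Δ_n, then x = χ^S/|S| and S is a maximal stable set (i.e., every vertex outside S has a neighbor in S). -/
open Matrix Finset
open scoped Classical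

lemma expand {n : ℕ} (G : SimpleGraph (Fin n)) (x : Fin n → ℝ) (i j : Fin n)
    (hadj : ¬ G.Adj i j) (hij : i ≠ j) (t : ℝ) :
    fG G (x + t • (Pi.single j 1 - Pi.single i 1)) =
      fG G x + 2*t*((((1 : Matrix (Fin n) (Fin n) ℝ) + G.adjMatrix ℝ) *ᵥ x) j
        - (((1 : Matrix (Fin n) (Fin n) ℝ) + G.adjMatrix ℝ) *ᵥ x) i) + 2*t^2 := by
  set M : Matrix (Fin n) (Fin n) ℝ := 1 + G.adjMatrix ℝ with hM
  have hsymm : Mᵀ = M := by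
    rw [hM, Matrix.transpose_add, Matrix.transpose_one,
      (SimpleGraph.isSymm_adjMatrix G : (G.adjMatrix ℝ)ᵀ = _)]
  set d : Fin n → ℝ := Pi.single j 1 - Pi.single i 1 with hd
  have hsym : ∀ u v : Fin n → ℝ, u ⬝ᵥ M *ᵥ v = v ⬝ᵥ M *ᵥ u := by
    intro u v
    rw [Matrix.dotProduct_mulVec, ← Matrix.mulVec_transpose, hsymm, dotProduct_comm]
  have hdMx : d ⬝ᵥ M *ᵥ x = (M *ᵥ x) j - (M *ᵥ x) i := by
    rw [hd, sub_dotProduct, single_dotProduct, single_dotProduct]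
    ring
  have hMd : ∀ k, (M *ᵥ d) k = M k j - M k i := by
    intro k
    rw [hd, Matrix.mulVec_sub, Matrix.mulVec_single, Matrix.mulVec_single]
    simp [Pi.sub_apply]
  have hMij : M i j = 0 := by
    simp [hM, Matrix.one_apply, hij, hadj]
  have hMji : M j i = 0 := by
    have hadj' : ¬ G.Adj j i := fun h => hadj h.symm
    simp [hM, Matrix.one_apply, hij.symm, hadj']
  have hMii : M i i = 1 := by simp [hM, Matrix.one_apply]
  have hMjj : M j j = 1 := by simp [hM, Matrix.one_apply]
  have hdMd : d ⬝ᵥ M *ᵥ d = 2 := by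
    rw [hd, sub_dotProduct, single_dotProduct, single_dotProduct,
      hMd, hMd, hMij, hMji, hMii, hMjj]
    ring
  show (x + t • d) ⬝ᵥ M *ᵥ (x + t • d) = x ⬝ᵥ M *ᵥ x + 2*t*((M *ᵥ x) j - (M *ᵥ x) i) + 2*t^2
  rw [Matrix.mulVec_add, Matrix.mulVec_smul, dotProduct_add, add_dotProduct,
    add_dotProduct, dotProduct_smul, smul_dotProduct,
    smul_dotProduct, dotProduct_smul, hsym x d, hdMx, hdMd]
  simp only [smul_eq_mul]
  ring

lemma key {n : ℕ} (G : SimpleGraph (Fin n)) (x : Fin n → ℝ)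
    (hx : x ∈ stdSimplex ℝ (Fin n))
    (hloc : IsLocalMinOn (fG G) (stdSimplex ℝ (Fin n)) x)
    (i j : Fin n) (hij : i ≠ j) (hadj : ¬ G.Adj i j) (hxi : 0 < x i)
    (hlt : (((1 : Matrix (Fin n) (Fin n) ℝ) + G.adjMatrix ℝ) *ᵥ x) j
        < (((1 : Matrix (Fin n) (Fin n) ℝ) + G.adjMatrix ℝ) *ᵥ x) i) : False := by
  set c : ℝ := (((1 : Matrix (Fin n) (Fin n) ℝ) + G.adjMatrix ℝ) *ᵥ x) j
        - (((1 : Matrix (Fin n) (Fin n) ℝ) + G.adjMatrix ℝ) *ᵥ x) i with hc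
  have hcneg : c < 0 := by rw [hc]; linarith
  set d : Fin n → ℝ := Pi.single j 1 - Pi.single i 1 with hd
  set γ : ℝ → (Fin n → ℝ) := fun t => x + t • d with hγ
  -- γ t in simplex for t ∈ Ioo 0 (x i)
  have hmem : ∀ t ∈ Set.Ioo (0:ℝ) (x i), γ t ∈ stdSimplex ℝ (Fin n) := by
    rintro t ⟨ht0, hti⟩
    constructor
    · intro k
      have hxk := hx.1 k
      by_cases hk : k = i
      · subst hk
        simp [hγ, hd, Pi.single_apply, hij.symm]
        linarith
      · by_cases hk' : k = j
        · subst hk'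
          simp [hγ, hd, Pi.single_apply, hij, Ne.symm hij]
          linarith
        · simp [hγ, hd, Pi.single_apply, hk, hk']
          linarith
    · have h1 : ∑ k, Pi.single j (1:ℝ) k = 1 := by rw [Finset.sum_pi_single']; simp
      have h2 : ∑ k, Pi.single i (1:ℝ) k = 1 := by rw [Finset.sum_pi_single']; simp
      simp only [hγ, hd, Pi.add_apply, Pi.smul_apply, Pi.sub_apply, smul_eq_mul, mul_sub]
      rw [Finset.sum_add_distrib, Finset.sum_sub_distrib, ← Finset.mul_sum, ← Finset.mul_sum,
        h1, h2, hx.2]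
      ring
  -- tendsto
  have hIoo : Set.Ioo (0:ℝ) (x i) ∈ nhdsWithin (0:ℝ) (Set.Ioi 0) :=
    Ioo_mem_nhdsGT_of_mem ⟨le_refl 0, hxi⟩
  have hcont : Filter.Tendsto γ (nhdsWithin 0 (Set.Ioi 0)) (nhdsWithin x (stdSimplex ℝ (Fin n))) := by
    apply tendsto_nhdsWithin_of_tendsto_nhds_of_eventually_within
    · have : Filter.Tendsto γ (nhds 0) (nhds (γ 0)) := by
        apply Continuous.tendsto
        exact continuous_const.add (continuous_id.smul continuous_const)
      simpa [hγ] using this.mono_left nhdsWithin_le_nhds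
    · exact Filter.eventually_of_mem hIoo hmem
  have hev : ∀ᶠ t in nhdsWithin (0:ℝ) (Set.Ioi 0), fG G x ≤ fG G (γ t) :=
    hcont.eventually hloc
  have hev2 : ∀ᶠ t in nhdsWithin (0:ℝ) (Set.Ioi 0), t ∈ Set.Ioo (0:ℝ) (-c/2) :=
    Filter.eventually_of_mem (Ioo_mem_nhdsGT_of_mem ⟨le_refl 0, by linarith⟩) (fun t ht => ht)
  have := (hev.and hev2).exists
  obtain ⟨t, hle, ht0, htc⟩ := this
  rw [hγ] at hle
  simp only at hle
  rw [expand G x i j hadj hij t, ← hc] at hle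
  nlinarith

theorem stmt_4 (n : ℕ) (G : SimpleGraph (Fin n)) (x : Fin n → ℝ)
    (hx : x ∈ stdSimplex ℝ (Fin n)) (S : Finset (Fin n))
    (hsupp : ∀ i, i ∈ S ↔ x i ≠ 0) (hstab : IsStable G S)
    (hloc : IsLocalMinOn (fG G) (stdSimplex ℝ (Fin n)) x) :
    x = (S.card : ℝ)⁻¹ • indic S ∧ ∀ j ∉ S, ∃ i ∈ S, G.Adj i j := by
  have hxnn := hx.1
  have hxpos : ∀ i ∈ S, 0 < x i := fun i hi =>
    lt_of_le_of_ne (hxnn i) (Ne.symm ((hsupp i).1 hi))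
  have hxzero : ∀ i, i ∉ S → x i = 0 := by
    intro i hi
    by_contra h
    exact hi ((hsupp i).2 h)
  have hMapp : ∀ k, (((1 : Matrix (Fin n) (Fin n) ℝ) + G.adjMatrix ℝ) *ᵥ x) k
      = x k + ∑ u ∈ G.neighborFinset k, x u := by
    intro k
    rw [Matrix.add_mulVec, Pi.add_apply, Matrix.one_mulVec,
      SimpleGraph.adjMatrix_mulVec_apply]
  have hMS : ∀ i ∈ S, (((1 : Matrix (Fin n) (Fin n) ℝ) + G.adjMatrix ℝ) *ᵥ x) i = x i := by
    intro i hi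
    rw [hMapp i]
    have : ∑ u ∈ G.neighborFinset i, x u = 0 := by
      apply Finset.sum_eq_zero
      intro u hu
      rw [SimpleGraph.mem_neighborFinset] at hu
      refine hxzero u (fun huS => hstab i hi u huS hu)
    rw [this, add_zero]
  -- all coordinates on S are equal
  have heq : ∀ i ∈ S, ∀ j ∈ S, x i = x j := by
    intro i hi j hj
    by_contra hne
    rcases lt_or_gt_of_ne hne with h | h
    · exact key G x hx hloc j i (fun e => hne (by rw [e])) (hstab j hj i hi) (hxpos j hj)
        (by rw [hMS i hi, hMS j hj]; exact h)
    · exact key G x hx hloc i j (fun e => hne (by rw [e])) (hstab i hi j hj) (hxpos i hi)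
        (by rw [hMS i hi, hMS j hj]; exact h)
  have hSne : S.Nonempty := by
    by_contra h
    rw [Finset.not_nonempty_iff_eq_empty] at h
    have : ∑ k, x k = 0 := Finset.sum_eq_zero (fun k _ => hxzero k (by simp [h]))
    rw [hx.2] at this
    norm_num at this
  obtain ⟨i₀, hi₀⟩ := hSne
  have hsum : ∑ k, x k = ∑ k ∈ S, x k := by
    symm
    apply Finset.sum_subset (Finset.subset_univ S)
    intro k _ hk
    exact hxzero k hk
  have hcard : (1:ℝ) = S.card * x i₀ := by
    rw [← hx.2, hsum]
    rw [Finset.sum_congr rfl (fun k hk => heq k hk i₀ hi₀)]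
    simp [mul_comm]
  have hcardpos : (0:ℝ) < S.card := by
    by_contra h
    push_neg at h
    have : (S.card : ℝ) = 0 := le_antisymm h (by positivity)
    rw [this] at hcard; norm_num at hcard
  have hxi₀ : x i₀ = (S.card : ℝ)⁻¹ := by
    field_simp
    linarith [hcard]
  constructor
  · funext k
    by_cases hk : k ∈ S
    · rw [heq k hk i₀ hi₀, hxi₀]
      simp [indic, hk]
    · rw [hxzero k hk]
      simp [indic, hk]
  · intro j hj
    by_contra hno
    push_neg at hno
    have hMj : (((1 : Matrix (Fin n) (Fin n) ℝ) + G.adjMatrix ℝ) *ᵥ x) j = 0 := by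
      rw [hMapp j, hxzero j hj]
      have : ∑ u ∈ G.neighborFinset j, x u = 0 := by
        apply Finset.sum_eq_zero
        intro u hu
        rw [SimpleGraph.mem_neighborFinset] at hu
        exact hxzero u (fun huS => hno u huS hu.symm)
      rw [this]; ring
    refine key G x hx hloc i₀ j (fun e => hj (e ▸ hi₀)) (fun h => hno i₀ hi₀ h)
      (hxpos i₀ hi₀) ?_
    rw [hMS i₀ hi₀, hMj]
    exact hxpos i₀ hi₀
end

section
/- Let G be a graph, S a stable set with |S| = k, and u = χ^S/k. Then u is a strict local minimizer of f_G over Δ_n if and only if every vertex j ∉ S has at least two neighbors in S (deg_S(j) ≥ 2 for all j ∈ V \ S). -/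
open Matrix Finset
open scoped Classical

lemma fG_expand {n : ℕ} (G : SimpleGraph (Fin n)) (y : Fin n → ℝ) :
    fG G y = ∑ i, (y i)^2 + ∑ i, ∑ j, (if G.Adj i j then y i * y j else 0) := by
  unfold fG qform
  rw [Matrix.add_mulVec, dotProduct_add]
  congr 1
  · simp [dotProduct, Matrix.one_mulVec, sq]
  · simp only [dotProduct, mulVec, SimpleGraph.adjMatrix_apply, Finset.mul_sum]
    refine Finset.sum_congr rfl fun i _ => Finset.sum_congr rfl fun j _ => ?_
    split_ifs <;> simp


lemma cross_split {n : ℕ} (G : SimpleGraph (Fin n)) (S : Finset (Fin n)) (hS : IsStable G S)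
    (y : Fin n → ℝ) :
    ∑ i, ∑ j, (if G.Adj i j then y i * y j else 0)
      = 2 * ∑ j ∈ Sᶜ, y j * ∑ i ∈ S.filter (fun i => G.Adj i j), y i
        + ∑ i ∈ Sᶜ, ∑ j ∈ Sᶜ, (if G.Adj i j then y i * y j else 0) := by
  have inner : ∀ j, ∑ i ∈ S, (if G.Adj i j then y i * y j else 0)
      = y j * ∑ i ∈ S.filter (fun i => G.Adj i j), y i := by
    intro j
    rw [Finset.mul_sum, Finset.sum_filter]
    exact Finset.sum_congr rfl fun i _ => by split_ifs <;> ring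
  have hsplit : ∀ F : Fin n → ℝ, ∑ i, F i = ∑ i ∈ S, F i + ∑ i ∈ Sᶜ, F i :=
    fun F => (Finset.sum_add_sum_compl S F).symm
  rw [hsplit (fun i => ∑ j, (if G.Adj i j then y i * y j else 0))]
  have h1 : ∑ i ∈ S, ∑ j, (if G.Adj i j then y i * y j else 0)
      = ∑ j ∈ Sᶜ, y j * ∑ i ∈ S.filter (fun i => G.Adj i j), y i := by
    rw [Finset.sum_comm]
    simp only [inner]
    rw [hsplit fun j => y j * ∑ i ∈ S.filter (fun i => G.Adj i j), y i]
    have h0 : ∑ j ∈ S, y j * ∑ i ∈ S.filter (fun i => G.Adj i j), y i = 0 :=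
      Finset.sum_eq_zero fun j hj => by
        rw [Finset.filter_eq_empty_iff.mpr fun i hi => hS i hi j hj]
        simp
    rw [h0, zero_add]
  have h2 : ∑ i ∈ Sᶜ, ∑ j, (if G.Adj i j then y i * y j else 0)
      = ∑ i ∈ Sᶜ, y i * ∑ j ∈ S.filter (fun j => G.Adj j i), y j
        + ∑ i ∈ Sᶜ, ∑ j ∈ Sᶜ, (if G.Adj i j then y i * y j else 0) := by
    rw [← Finset.sum_add_distrib]
    refine Finset.sum_congr rfl fun i _ => ?_
    rw [hsplit fun j => (if G.Adj i j then y i * y j else 0)]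
    congr 1
    rw [← inner i]
    refine Finset.sum_congr rfl fun j _ => ?_
    rw [G.adj_comm]
    split_ifs <;> ring
  rw [h1, h2]
  ring


lemma indic_smul_apply {n : ℕ} (S : Finset (Fin n)) (i : Fin n) :
    ((S.card : ℝ)⁻¹ • indic S) i = if i ∈ S then (S.card : ℝ)⁻¹ else 0 := by
  simp only [Pi.smul_apply, indic, smul_eq_mul]
  split_ifs <;> simp


lemma fG_decomp {n : ℕ} (G : SimpleGraph (Fin n)) (S : Finset (Fin n)) (hS : IsStable G S)
    (hSne : S.Nonempty) (y : Fin n → ℝ) :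
    fG G y = ∑ i, (y i - ((S.card : ℝ)⁻¹ • indic S) i)^2
      + 2 * (S.card : ℝ)⁻¹ * ∑ i ∈ S, y i - (S.card : ℝ)⁻¹
      + (2 * ∑ j ∈ Sᶜ, y j * ∑ i ∈ S.filter (fun i => G.Adj i j), y i
        + ∑ i ∈ Sᶜ, ∑ j ∈ Sᶜ, (if G.Adj i j then y i * y j else 0)) := by
  have hk : (S.card : ℝ) ≠ 0 := Nat.cast_ne_zero.mpr (Finset.card_ne_zero.mpr hSne)
  rw [fG_expand, cross_split G S hS]
  have e2 : ∑ i, ((S.card : ℝ)⁻¹ • indic S) i * y i = (S.card:ℝ)⁻¹ * ∑ i ∈ S, y i := by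
    simp only [indic_smul_apply, ite_mul, zero_mul, Finset.sum_ite_mem, Finset.univ_inter,
      Finset.mul_sum]
  have e3 : ∑ i, ((S.card:ℝ)⁻¹ • indic S) i ^ 2 = (S.card:ℝ)⁻¹ := by
    have h : ∀ i, ((S.card:ℝ)⁻¹ • indic S) i ^ 2
        = if i ∈ S then (S.card:ℝ)⁻¹ * (S.card:ℝ)⁻¹ else 0 := by
      intro i; rw [indic_smul_apply]; split_ifs <;> ring
    rw [Finset.sum_congr rfl fun i _ => h i, Finset.sum_ite_mem, Finset.univ_inter,
      Finset.sum_const, nsmul_eq_mul, ← mul_assoc, mul_inv_cancel₀ hk, one_mul]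
  have e1 : ∑ i, (y i - ((S.card : ℝ)⁻¹ • indic S) i)^2
      = ∑ i, (y i)^2 - 2 * ((S.card : ℝ)⁻¹ * ∑ i ∈ S, y i) + (S.card:ℝ)⁻¹ := by
    have := Finset.sum_congr rfl fun i (_ : i ∈ (univ : Finset (Fin n))) =>
      (by ring : (y i - ((S.card : ℝ)⁻¹ • indic S) i)^2
        = (y i)^2 - 2 * (((S.card : ℝ)⁻¹ • indic S) i * y i) + ((S.card:ℝ)⁻¹ • indic S) i ^ 2)
    rw [this, Finset.sum_add_distrib, Finset.sum_sub_distrib, ← Finset.mul_sum, e2, e3]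
  rw [e1]; ring


lemma sum_u_S {n : ℕ} (S : Finset (Fin n)) (hSne : S.Nonempty) :
    ∑ i ∈ S, ((S.card : ℝ)⁻¹ • indic S) i = 1 := by
  have hk : (S.card : ℝ) ≠ 0 := Nat.cast_ne_zero.mpr (Finset.card_ne_zero.mpr hSne)
  rw [Finset.sum_congr rfl fun i hi => by rw [indic_smul_apply, if_pos hi]]
  rw [Finset.sum_const, nsmul_eq_mul, mul_inv_cancel₀ hk]


lemma fG_u {n : ℕ} (G : SimpleGraph (Fin n)) (S : Finset (Fin n)) (hS : IsStable G S)
    (hSne : S.Nonempty) : fG G ((S.card : ℝ)⁻¹ • indic S) = (S.card : ℝ)⁻¹ := by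
  have h2 : ∀ j ∈ Sᶜ, ((S.card:ℝ)⁻¹ • indic S) j = 0 := fun j hj => by
    rw [indic_smul_apply, if_neg (Finset.mem_compl.mp hj)]
  rw [fG_decomp G S hS hSne, sum_u_S S hSne]
  have hz1 : ∑ j ∈ Sᶜ, ((S.card:ℝ)⁻¹ • indic S) j *
      ∑ i ∈ S.filter (fun i => G.Adj i j), ((S.card:ℝ)⁻¹ • indic S) i = 0 :=
    Finset.sum_eq_zero fun j hj => by rw [h2 j hj, zero_mul]
  have hz2 : ∑ i ∈ Sᶜ, ∑ j ∈ Sᶜ, (if G.Adj i j then ((S.card:ℝ)⁻¹ • indic S) i *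
      ((S.card:ℝ)⁻¹ • indic S) j else 0) = 0 :=
    Finset.sum_eq_zero fun i hi => Finset.sum_eq_zero fun j hj => by
      rw [h2 i hi]; split_ifs <;> simp
  rw [hz1, hz2]
  have hz0 : ∑ i, (((S.card:ℝ)⁻¹ • indic S) i - ((S.card:ℝ)⁻¹ • indic S) i)^2 = 0 := by simp
  rw [hz0]; ring


theorem stmt9_back {n : ℕ} (G : SimpleGraph (Fin n)) (S : Finset (Fin n))
    (hS : IsStable G S) (hSne : S.Nonempty)
    (hdeg : ∀ j ∉ S, 2 ≤ (S.filter (fun i => G.Adj i j)).card) :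
    ∃ ε > 0, ∀ y ∈ stdSimplex ℝ (Fin n), y ≠ (S.card : ℝ)⁻¹ • indic S →
        dist y ((S.card : ℝ)⁻¹ • indic S) < ε →
        fG G ((S.card : ℝ)⁻¹ • indic S) < fG G y := by
  have hkpos : 0 < (S.card : ℝ) := by exact_mod_cast Finset.card_pos.mpr hSne
  refine ⟨(2 * (S.card:ℝ))⁻¹, by positivity, ?_⟩
  intro y hy hne hdist
  obtain ⟨hy0, hy1⟩ := hy
  have hcoord : ∀ i, |y i - ((S.card:ℝ)⁻¹ • indic S) i| < (2 * (S.card:ℝ))⁻¹ := by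
    intro i
    have h1 : dist (y i) (((S.card:ℝ)⁻¹ • indic S) i) ≤ dist y ((S.card:ℝ)⁻¹ • indic S) :=
      dist_le_pi_dist y _ i
    rw [Real.dist_eq] at h1
    linarith
  rw [fG_u G S hS hSne, fG_decomp G S hS hSne]
  have hQ : 0 < ∑ i, (y i - ((S.card:ℝ)⁻¹ • indic S) i)^2 := by
    obtain ⟨i, hi⟩ := Function.ne_iff.mp hne
    refine Finset.sum_pos' (fun i _ => sq_nonneg _) ⟨i, Finset.mem_univ i, ?_⟩
    exact lt_of_le_of_ne (sq_nonneg _) (Ne.symm (pow_ne_zero 2 (sub_ne_zero.mpr hi)))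
  have hD : 0 ≤ ∑ i ∈ Sᶜ, ∑ j ∈ Sᶜ, (if G.Adj i j then y i * y j else 0) :=
    Finset.sum_nonneg fun i _ => Finset.sum_nonneg fun j _ => by
      split_ifs
      · exact mul_nonneg (hy0 i) (hy0 j)
      · exact le_refl 0
  have hB : ∀ j ∈ Sᶜ, (S.card:ℝ)⁻¹ ≤ ∑ i ∈ S.filter (fun i => G.Adj i j), y i := by
    intro j hj
    have hjS : j ∉ S := Finset.mem_compl.mp hj
    have hcard := hdeg j hjS
    have hhalf : (2*(S.card:ℝ))⁻¹ + (2*(S.card:ℝ))⁻¹ = (S.card:ℝ)⁻¹ := by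
      rw [mul_inv]; ring
    have hlow : ∀ i ∈ S.filter (fun i => G.Adj i j), (2*(S.card:ℝ))⁻¹ ≤ y i := by
      intro i hi
      have hiS := (Finset.mem_filter.mp hi).1
      have h := abs_lt.mp (hcoord i)
      rw [indic_smul_apply, if_pos hiS] at h
      linarith [h.1]
    calc (S.card:ℝ)⁻¹ = 2 * (2*(S.card:ℝ))⁻¹ := by linarith
      _ ≤ ((S.filter (fun i => G.Adj i j)).card : ℝ) * (2*(S.card:ℝ))⁻¹ := by
          apply mul_le_mul_of_nonneg_right _ (by positivity)
          exact_mod_cast hcard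
      _ ≤ ∑ i ∈ S.filter (fun i => G.Adj i j), y i := by
          have := Finset.card_nsmul_le_sum (S.filter (fun i => G.Adj i j)) y _ hlow
          rwa [nsmul_eq_mul] at this
  have hC : ∑ j ∈ Sᶜ, y j * (S.card:ℝ)⁻¹
      ≤ ∑ j ∈ Sᶜ, y j * ∑ i ∈ S.filter (fun i => G.Adj i j), y i :=
    Finset.sum_le_sum fun j hj => mul_le_mul_of_nonneg_left (hB j hj) (hy0 j)
  rw [← Finset.sum_mul] at hC
  have hsplit : ∑ i ∈ S, y i + ∑ i ∈ Sᶜ, y i = 1 := by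
    rw [Finset.sum_add_sum_compl]; exact hy1
  have hA : ∑ i ∈ S, y i = 1 - ∑ i ∈ Sᶜ, y i := by linarith
  rw [hA]
  nlinarith [hQ, hD, hC]


theorem stmt9_fwd {n : ℕ} (G : SimpleGraph (Fin n)) (S : Finset (Fin n))
    (hS : IsStable G S) (hSne : S.Nonempty)
    (hmin : ∃ ε > 0, ∀ y ∈ stdSimplex ℝ (Fin n), y ≠ (S.card : ℝ)⁻¹ • indic S →
        dist y ((S.card : ℝ)⁻¹ • indic S) < ε →
        fG G ((S.card : ℝ)⁻¹ • indic S) < fG G y) :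
    ∀ j ∉ S, 2 ≤ (S.filter (fun i => G.Adj i j)).card := by
  intro j₀ hj₀
  by_contra hd
  push_neg at hd
  obtain ⟨ε, hε, hloc⟩ := hmin
  have hkpos : 0 < (S.card : ℝ) := by exact_mod_cast Finset.card_pos.mpr hSne
  obtain ⟨i₀, hi₀S, hcase⟩ : ∃ i₀ ∈ S, (S.filter (fun i => G.Adj i j₀) = ∅ ∨
      S.filter (fun i => G.Adj i j₀) = {i₀}) := by
    have h01 : (S.filter (fun i => G.Adj i j₀)).card = 0 ∨
        (S.filter (fun i => G.Adj i j₀)).card = 1 := by omega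
    rcases h01 with h0 | h1
    · obtain ⟨i₀, hi₀⟩ := hSne
      exact ⟨i₀, hi₀, Or.inl (Finset.card_eq_zero.mp h0)⟩
    · obtain ⟨i₀, hfil⟩ := Finset.card_eq_one.mp h1
      have hi₀ : i₀ ∈ S := by
        have h : i₀ ∈ S.filter (fun i => G.Adj i j₀) := hfil ▸ Finset.mem_singleton_self i₀
        exact (Finset.mem_filter.mp h).1
      exact ⟨i₀, hi₀, Or.inr hfil⟩
  have hi₀j₀ : i₀ ≠ j₀ := fun h => hj₀ (h ▸ hi₀S)
  set u : Fin n → ℝ := (S.card:ℝ)⁻¹ • indic S with hu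
  set t : ℝ := min (ε/2) (S.card:ℝ)⁻¹ with ht
  have ht0 : 0 < t := lt_min (by linarith) (by positivity)
  have htk : t ≤ (S.card:ℝ)⁻¹ := min_le_right _ _
  have htε : t < ε := lt_of_le_of_lt (min_le_left _ _) (by linarith)
  set y : Fin n → ℝ := fun i => u i + (if i = j₀ then t else 0) - (if i = i₀ then t else 0)
    with hy
  have hyi : ∀ i, y i - u i = (if i = j₀ then t else 0) - (if i = i₀ then t else 0) := by
    intro i; simp only [hy]; ring
  have hu0 : ∀ i, i ∉ S → u i = 0 := fun i hi => by
    rw [hu, indic_smul_apply, if_neg hi]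
  have huS : ∀ i, i ∈ S → u i = (S.card:ℝ)⁻¹ := fun i hi => by
    rw [hu, indic_smul_apply, if_pos hi]
  have hyout : ∀ b, b ∉ S → b ≠ j₀ → y b = 0 := by
    intro b hbS hbj
    have hbi : b ≠ i₀ := fun h => hbS (h ▸ hi₀S)
    simp only [hy, if_neg hbj, if_neg hbi, hu0 b hbS, add_zero, sub_zero]
  have hyj₀ : y j₀ = t := by
    simp only [hy, if_pos rfl, ite_true, if_neg (fun h => hi₀j₀ h.symm : ¬ j₀ = i₀),
      hu0 j₀ hj₀, zero_add, sub_zero]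
  have hyi₀ : y i₀ = (S.card:ℝ)⁻¹ - t := by
    simp only [hy, if_pos rfl, ite_true, if_neg hi₀j₀, huS i₀ hi₀S, add_zero]
  -- y ∈ stdSimplex
  have hsumu : ∑ i, u i = 1 := by
    rw [← Finset.sum_add_sum_compl S, sum_u_S S hSne]
    have : ∑ i ∈ Sᶜ, u i = 0 :=
      Finset.sum_eq_zero fun i hi => hu0 i (Finset.mem_compl.mp hi)
    rw [this]; ring
  have hymem : y ∈ stdSimplex ℝ (Fin n) := by
    constructor
    · intro i
      rcases eq_or_ne i j₀ with rfl | h1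
      · rw [hyj₀]; exact le_of_lt ht0
      rcases eq_or_ne i i₀ with rfl | h2
      · rw [hyi₀]; linarith
      · simp only [hy, if_neg h1, if_neg h2, add_zero, sub_zero]
        rw [hu, indic_smul_apply]
        split_ifs
        · positivity
        · exact le_refl 0
    · show ∑ i, y i = 1
      simp only [hy]
      rw [Finset.sum_sub_distrib, Finset.sum_add_distrib, hsumu]
      simp only [Finset.sum_ite_eq', Finset.mem_univ, if_pos]
      ring
  have hyne : y ≠ u := by
    intro h
    have h2 := congrFun h j₀
    rw [hyj₀, hu0 j₀ hj₀] at h2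
    exact ht0.ne' h2
  have hdisty : dist y u < ε := by
    rw [dist_pi_lt_iff hε]
    intro i
    rw [Real.dist_eq, hyi i]
    rcases eq_or_ne i j₀ with rfl | h1
    · rw [if_pos rfl, if_neg (fun h => hi₀j₀ h.symm : ¬ i = i₀), sub_zero, abs_of_pos ht0]
      exact htε
    rcases eq_or_ne i i₀ with rfl | h2
    · rw [if_neg h1, if_pos rfl, zero_sub, abs_neg, abs_of_pos ht0]
      exact htε
    · rw [if_neg h1, if_neg h2, sub_zero, abs_zero]
      exact hε
  have hlt := hloc y hymem hyne hdisty
  rw [fG_u G S hS hSne, fG_decomp G S hS hSne] at hlt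
  have hQ : ∑ i, (y i - u i)^2 = 2 * t^2 := by
    have hterm : ∀ i, (y i - u i)^2
        = (if i = j₀ then t^2 else 0) + (if i = i₀ then t^2 else 0) := by
      intro i
      rw [hyi i]
      rcases eq_or_ne i j₀ with rfl | h1
      · rw [if_pos rfl, if_pos rfl, if_neg (fun h => hi₀j₀ h.symm : ¬ i = i₀),
          if_neg (fun h => hi₀j₀ h.symm : ¬ i = i₀)]
        ring
      rcases eq_or_ne i i₀ with rfl | h2
      · rw [if_neg h1, if_neg h1, if_pos rfl, if_pos rfl]; ring
      · rw [if_neg h1, if_neg h1, if_neg h2, if_neg h2]; ring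
    rw [Finset.sum_congr rfl fun i _ => hterm i, Finset.sum_add_distrib]
    simp only [Finset.sum_ite_eq', Finset.mem_univ, if_pos]
    ring
  have hA : ∑ i ∈ S, y i = 1 - t := by
    simp only [hy]
    rw [Finset.sum_sub_distrib, Finset.sum_add_distrib, sum_u_S S hSne,
      Finset.sum_ite_eq' S j₀ (fun _ => t), Finset.sum_ite_eq' S i₀ (fun _ => t),
      if_neg hj₀, if_pos hi₀S]
    ring
  have hC : ∑ j ∈ Sᶜ, y j * ∑ i ∈ S.filter (fun i => G.Adj i j), y i
      = t * ∑ i ∈ S.filter (fun i => G.Adj i j₀), y i := by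
    rw [Finset.sum_eq_single_of_mem j₀ (Finset.mem_compl.mpr hj₀)
      (fun b hb hbne => by rw [hyout b (Finset.mem_compl.mp hb) hbne, zero_mul]), hyj₀]
  have hD : ∑ i ∈ Sᶜ, ∑ j ∈ Sᶜ, (if G.Adj i j then y i * y j else 0) = 0 := by
    refine Finset.sum_eq_zero fun i hi => Finset.sum_eq_zero fun j hj => ?_
    split_ifs with hadj
    · rcases eq_or_ne i j₀ with heq | h1
      · have hjne : j ≠ j₀ := by
          rintro rfl
          rw [heq] at hadj
          exact G.irrefl hadj
        rw [hyout j (Finset.mem_compl.mp hj) hjne, mul_zero]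
      · rw [hyout i (Finset.mem_compl.mp hi) h1, zero_mul]
    · rfl
  rw [hQ, hA, hC, hD] at hlt
  rcases hcase with hfe | hfs
  · rw [hfe] at hlt
    simp only [Finset.sum_empty, mul_zero] at hlt
    nlinarith [mul_le_mul_of_nonneg_left htk ht0.le, hkpos]
  · rw [hfs, Finset.sum_singleton, hyi₀] at hlt
    linarith [hlt]

theorem stmt_9 (n : ℕ) (G : SimpleGraph (Fin n)) (S : Finset (Fin n))
    (hS : IsStable G S) (hSne : S.Nonempty) :
    (∃ ε > 0, ∀ y ∈ stdSimplex ℝ (Fin n), y ≠ (S.card : ℝ)⁻¹ • indic S →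
        dist y ((S.card : ℝ)⁻¹ • indic S) < ε →
        fG G ((S.card : ℝ)⁻¹ • indic S) < fG G y) ↔
      (∀ j ∉ S, 2 ≤ (S.filter (fun i => G.Adj i j)).card) := by
  constructor
  · exact stmt9_fwd G S hS hSne
  · exact stmt9_back G S hS hSne
end

section
/- Let t > 1 and let M ∈ 𝒮^n with M_{11} = M_{22} = 1 and M_{12} = M_{21} = t. Then every global minimizer u of min{x^T M x : x ∈ Δ_n} satisfies u_1 u_2 = 0. -/
open Matrix Finset
open scoped Classical

lemma qform_expand {m : ℕ} (M : Matrix (Fin m) (Fin m) ℝ) (u d : Fin m → ℝ) (s : ℝ) :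
    qform M (u + s • d) =
      qform M u + s * ((d ⬝ᵥ M.mulVec u) + (u ⬝ᵥ M.mulVec d)) + s^2 * qform M d := by
  simp only [qform, Matrix.mulVec_add, Matrix.mulVec_smul, dotProduct_add, add_dotProduct,
    dotProduct_smul, smul_dotProduct, smul_eq_mul]
  ring

theorem stmt_11 (n : ℕ) (t : ℝ) (ht : 1 < t)
    (M : Matrix (Fin (n+2)) (Fin (n+2)) ℝ) (hM : M.IsSymm)
    (h11 : M 0 0 = 1) (h22 : M 1 1 = 1) (h12 : M 0 1 = t) (h21 : M 1 0 = t)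
    (u : Fin (n+2) → ℝ) (hu : u ∈ globMin (qform M)) :
    u 0 * u 1 = 0 := by
  obtain ⟨⟨hpos, hsum⟩, hmin⟩ := hu
  by_contra hne
  obtain ⟨h0ne, h1ne⟩ := mul_ne_zero_iff.mp hne
  have h0 : 0 < u 0 := lt_of_le_of_ne (hpos 0) (Ne.symm h0ne)
  have h1 : 0 < u 1 := lt_of_le_of_ne (hpos 1) (Ne.symm h1ne)
  have h01 : (0 : Fin (n+2)) ≠ 1 := by simp [Fin.ext_iff]
  set d : Fin (n+2) → ℝ := Pi.single 0 1 - Pi.single 1 1 with hd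
  have hd0 : d 0 = 1 := by simp [hd, Pi.single_apply, h01]
  have hd1 : d 1 = -1 := by simp [hd, Pi.single_apply, h01.symm]
  have hdj : ∀ i : Fin (n+2), i ≠ 0 → i ≠ 1 → d i = 0 := by
    intro i hi0 hi1
    simp [hd, Pi.single_apply, hi0, hi1]
  -- d ⬝ᵥ v = v 0 - v 1
  have hdv : ∀ v : Fin (n+2) → ℝ, d ⬝ᵥ v = v 0 - v 1 := by
    intro v
    simp [hd, sub_dotProduct, single_dotProduct]
  have hvd : ∀ v : Fin (n+2) → ℝ, M.mulVec d = fun i => M i 0 - M i 1 := by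
    intro v
    funext i
    simp [hd, Matrix.mulVec_sub, Matrix.mulVec_single]
  have hMd : M.mulVec d = fun i => M i 0 - M i 1 := hvd u
  have hqd : qform M d = 2 - 2 * t := by
    rw [qform, hdv, hMd]
    simp [h11, h22, h12, h21]; ring
  -- membership in stdSimplex for perturbations
  have hmem : ∀ s : ℝ, 0 ≤ u 0 + s → 0 ≤ u 1 - s → u + s • d ∈ stdSimplex ℝ (Fin (n+2)) := by
    intro s hs0 hs1
    constructor
    · intro i
      by_cases hi0 : i = 0
      · subst hi0; simpa [hd0, mul_one] using hs0
      · by_cases hi1 : i = 1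
        · subst hi1
          have : u 1 + s * d 1 = u 1 - s := by rw [hd1]; ring
          simpa [this] using hs1
        · simp [hdj i hi0 hi1, hpos i]
    · have hds : ∑ i, d i = 0 := by
        simp [hd, Finset.sum_sub_distrib]
      calc ∑ i, (u + s • d) i = ∑ i, (u i + s * d i) := by simp [mul_comm]
        _ = (∑ i, u i) + s * ∑ i, d i := by rw [Finset.sum_add_distrib, Finset.mul_sum]
        _ = 1 := by rw [hsum, hds]; ring
  set B : ℝ := (d ⬝ᵥ M.mulVec u) + (u ⬝ᵥ M.mulVec d) with hB
  have hy := hmin (u + (u 1) • d) (hmem (u 1) (by linarith) (by linarith))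
  have hz := hmin (u + (-(u 0)) • d) (hmem (-(u 0)) (by linarith) (by linarith))
  rw [qform_expand, hqd, ← hB] at hy hz
  nlinarith [mul_nonneg h0.le (by linarith : (0:ℝ) ≤ u 1 * B + u 1 ^ 2 * (2 - 2*t)),
    mul_nonneg h1.le (by linarith : (0:ℝ) ≤ -(u 0) * B + (-(u 0)) ^ 2 * (2 - 2*t)),
    mul_pos (mul_pos h0 h1) (by linarith : (0:ℝ) < u 0 + u 1)]
end

section
/- Suppose I + A_G = λJ + Q + (ae^T + ea^T)/2 with λ ∈ ℝ, Q ⪰ 0, a ∈ ℝ^n_+. Then the relation "i = j or {i,j} ∈ E" is transitive, i.e., G is a disjoint union of cliques. -/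
open Matrix Finset
open scoped Classical

/-! The vector `x = eᵢ - 2eⱼ + eₖ` built on an induced path `i ~ j ~ k` has coordinate sum zero, so
it is annihilated by the quadratic forms of `J` and of `a eᵀ + e aᵀ`; the decomposition then gives
`xᵀ (I + A_G) x = xᵀ Q x ≥ 0`, whereas a direct computation gives `xᵀ (I + A_G) x = 6 - 8 = -2`. -/

section
variable {ι R : Type*} [Fintype ι] [CommRing R]

theorem dotProduct_vecMulVec_mulVec (x u v : ι → R) :
    x ⬝ᵥ (vecMulVec u v *ᵥ x) = (x ⬝ᵥ u) * (v ⬝ᵥ x) := by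
  rw [dotProduct_mulVec, vecMul_vecMulVec, smul_dotProduct, smul_eq_mul]

variable [DecidableEq ι]

def cherryVec (i j k : ι) : ι → R := Pi.single i 1 - Pi.single j 2 + Pi.single k 1

theorem cherryVec_dotProduct_one (i j k : ι) : cherryVec (R := R) i j k ⬝ᵥ 1 = 0 := by
  simp only [cherryVec, add_dotProduct, sub_dotProduct, single_dotProduct, Pi.one_apply]
  ring

theorem cherryVec_dotProduct_mulVec (M : Matrix ι ι R) (i j k : ι) :
    cherryVec i j k ⬝ᵥ (M *ᵥ cherryVec i j k) =
      M i i + 4 * M j j + M k k - 2 * (M i j + M j i + M j k + M k j) + M i k + M k i := by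
  simp only [cherryVec, mulVec_add, mulVec_sub, mulVec_single, add_dotProduct, sub_dotProduct,
    single_dotProduct, Pi.add_apply, Pi.sub_apply, Pi.smul_apply, col_apply,
    MulOpposite.smul_eq_mul_unop, MulOpposite.unop_op]
  ring

theorem SimpleGraph.cherryVec_dotProduct_one_add_adjMatrix_mulVec (G : SimpleGraph ι)
    [DecidableRel G.Adj] {i j k : ι} (hij : G.Adj i j) (hjk : G.Adj j k) (hik : i ≠ k)
    (hnik : ¬ G.Adj i k) :
    cherryVec i j k ⬝ᵥ ((1 + G.adjMatrix R) *ᵥ cherryVec i j k) = -2 := by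
  have hnki : ¬ G.Adj k i := fun h => hnik h.symm
  rw [cherryVec_dotProduct_mulVec]
  simp only [Matrix.add_apply, one_apply, adjMatrix_apply, G.irrefl, if_true, if_false,
    hij, hij.symm, hij.ne, hij.ne.symm, hjk, hjk.symm, hjk.ne, hjk.ne.symm, hik, hik.symm,
    hnik, hnki]
  norm_num

end

theorem stmt_14_general (n : ℕ) (G : SimpleGraph (Fin n))
    (Q : Matrix (Fin n) (Fin n) ℝ) (lam : ℝ) (a : Fin n → ℝ)
    (hQ : Q.PosSemidef)
    (hdecomp : (1 : Matrix (Fin n) (Fin n) ℝ) + G.adjMatrix ℝ =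
      lam • (Matrix.of fun _ _ => (1:ℝ)) + Q +
        (1/2 : ℝ) • (Matrix.vecMulVec a (fun _ => 1) + Matrix.vecMulVec (fun _ => 1) a)) :
    Transitive (fun i j : Fin n => i = j ∨ G.Adj i j) := by
  rintro i j k (rfl | hij) (rfl | hjk)
  · exact .inl rfl
  · exact .inr hjk
  · exact .inr hij
  by_contra! hik
  set x : Fin n → ℝ := cherryVec i j k
  have hx : x ⬝ᵥ (fun _ => 1) = 0 := cherryVec_dotProduct_one i j k
  have hJ : (Matrix.of fun _ _ => 1 : Matrix (Fin n) (Fin n) ℝ) =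
      vecMulVec (fun _ => 1) (fun _ => 1) := by
    ext; simp [vecMulVec_apply]
  have hform : x ⬝ᵥ ((1 + G.adjMatrix ℝ) *ᵥ x) = x ⬝ᵥ (Q *ᵥ x) := by
    simp only [hdecomp, hJ, add_mulVec, smul_mulVec, dotProduct_add, dotProduct_smul,
      dotProduct_vecMulVec_mulVec, hx, dotProduct_comm _ x, mul_zero, zero_mul, smul_zero,
      add_zero, zero_add]
  have hneg : x ⬝ᵥ ((1 + G.adjMatrix ℝ) *ᵥ x) = -2 :=
    G.cherryVec_dotProduct_one_add_adjMatrix_mulVec hij hjk hik.1 hik.2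
  have hQx : 0 ≤ x ⬝ᵥ (Q *ᵥ x) := by simpa using hQ.dotProduct_mulVec_nonneg x
  linarith

theorem stmt_14 (n : ℕ) (G : SimpleGraph (Fin n))
    (Q : Matrix (Fin n) (Fin n) ℝ) (lam : ℝ) (a : Fin n → ℝ)
    (ha : ∀ i, 0 ≤ a i) (hQ : Q.PosSemidef)
    (hdecomp : (1 : Matrix (Fin n) (Fin n) ℝ) + G.adjMatrix ℝ =
      lam • (Matrix.of fun _ _ => (1:ℝ)) + Q +
        (1/2 : ℝ) • (Matrix.vecMulVec a (fun _ => 1) + Matrix.vecMulVec (fun _ => 1) a)) :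
    Transitive (fun i j : Fin n => i = j ∨ G.Adj i j) :=
  stmt_14_general n G Q lam a hQ hdecomp
end
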